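/- Let 𝒲⁰(T;Z;H) = 𝒲(T;Z;H)·∏_{i=1}^k ∏_{a=k+1}^n (1 − Z_a/T_i) be the trigonometric weight function. For k-element subsets I, J of {1,...,n}, let σ_J ∈ S_n be the minimal-length permutation with J = {σ_J(1),...,σ_J(k)}, Z_I = (Z_{i_1},...,Z_{i_k}) for I = {i_1<...<i_k}, E(T;H) = ∏_{i=1}^k ∏_{j≠i} (1 − H·T_i/T_j), and R(Z) = ∏_{a=1}^k ∏_{b=k+1}^n (1 − Z_b/Z_a). Then 𝒲⁰(Z_I; Z_{σ_J}; H) = δ_{I,J} · E(Z_I; H) · R(Z_{σ_I}), where Z_{σ} = (Z_{σ(1)},...,Z_{σ(n)}). -/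

import Mathlib

noncomputable section

open MvPolynomial

/-- The rational-function field `ℂ(Z₁,…,Z_n,H)`. -/
abbrev ZF (n : ℕ) : Type := FractionRing (MvPolynomial (Fin n ⊕ Unit) ℂ)

def ZV (n : ℕ) (a : Fin n) : ZF n :=
  algebraMap (MvPolynomial (Fin n ⊕ Unit) ℂ) (ZF n) (X (Sum.inl a))

def HV (n : ℕ) : ZF n :=
  algebraMap (MvPolynomial (Fin n ⊕ Unit) ℂ) (ZF n) (X (Sum.inr ()))

/-- The function `U(T;Z;H)` of formula (3.1). -/
def Ufun {F : Type*} [Field F] (n k : ℕ) (T : Fin k → F) (Z : Fin n → F)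
    (H : F) : F :=
  ∏ i : Fin k,
    ((∏ a ∈ Finset.univ.filter (fun a : Fin n => a.1 < i.1),
        (1 - H * Z a / T i)) *
     (∏ b ∈ Finset.univ.filter (fun b : Fin n => i.1 < b.1 ∧ b.1 < k),
        (1 - Z b / T i)) *
     (∏ j ∈ Finset.univ.filter (fun j : Fin k => i < j),
        ((1 - H * T j / T i) / (1 - T j / T i))))

/-- The reduced trigonometric weight function `𝒲(T;Z;H) = Sym_T U(T;Z;H)`. -/
def Wtrig {F : Type*} [Field F] (n k : ℕ) (T : Fin k → F) (Z : Fin n → F)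
    (H : F) : F :=
  ∑ σ : Equiv.Perm (Fin k), Ufun n k (T ∘ σ) Z H

/-- The trigonometric weight function
`𝒲⁰(T;Z;H) = 𝒲(T;Z;H) ∏_{i≤k} ∏_{a>k} (1 − Z_a/T_i)`. -/
def W0 {F : Type*} [Field F] (n k : ℕ) (T : Fin k → F) (Z : Fin n → F)
    (H : F) : F :=
  Wtrig n k T Z H *
    ∏ i : Fin k, ∏ a ∈ Finset.univ.filter (fun a : Fin n => k ≤ a.1),
      (1 - Z a / T i)

/-- `E(T;H) = ∏_i ∏_{j≠i} (1 − H·T_i/T_j)`. -/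
def Efun {F : Type*} [Field F] (k : ℕ) (T : Fin k → F) (H : F) : F :=
  ∏ i : Fin k, ∏ j ∈ Finset.univ.filter (fun j : Fin k => j ≠ i),
    (1 - H * T i / T j)

/-- `R(Z) = ∏_{a≤k} ∏_{b>k} (1 − Z_b/Z_a)`. -/
def Rfun {F : Type*} [Field F] (n k : ℕ) (Z : Fin n → F) : F :=
  ∏ a ∈ Finset.univ.filter (fun a : Fin n => a.1 < k),
    ∏ b ∈ Finset.univ.filter (fun b : Fin n => k ≤ b.1),
      (1 - Z b / Z a)

/-- The increasing enumeration of a `k`-element subset of `{1, …, n}`. -/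
def enum {n k : ℕ} (I : Finset (Fin n)) (hI : I.card = k) : Fin k → Fin n :=
  fun a => (I.orderIsoOfFin hI a : Fin n)

/-- The minimal-length permutation `σ_J` with `{σ_J(1),…,σ_J(k)} = J`. -/
def permOfSubset {n k : ℕ} (hk : k ≤ n) (J : Finset (Fin n)) (hJ : J.card = k) :
    Equiv.Perm (Fin n) :=
  (finCongr (Nat.add_sub_cancel' hk)).symm.trans <|
    finSumFinEquiv.symm.trans <|
      (Equiv.sumCongr (J.orderIsoOfFin hJ).toEquiv
          ((Jᶜ.orderIsoOfFin (by simp [Finset.card_compl, hJ])).toEquiv.trans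
            (Equiv.subtypeEquivRight fun x => Finset.mem_compl))).trans
        (Equiv.sumCompl (· ∈ J))

/-! At `T = Z_I`, `Z = Z_{σ_J}` with `I ≠ J`, an element of `I \ J` occurs both as some `T_i` and
as some `Z_a` with `a > k`, so the extra factor `∏ (1 − Z_a/T_i)` of `𝒲⁰` vanishes. When `I = J` we
have `Z_a = T_a` for `a ≤ k`. The term of `Sym_T` for a permutation `σ ≠ 1` then contains the factor
`1 − Z_{σ i}/T_{σ i} = 0` at any `i < σ i`. In the identity term the factors `1 − Z_b/T_i` cancel the
denominators `1 − T_b/T_i`, which leaves `E`, and the extra factor becomes `R`. -/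

open Finset

theorem Equiv.Perm.exists_lt_apply_of_ne_one {k : ℕ} {σ : Equiv.Perm (Fin k)} (hσ : σ ≠ 1) :
    ∃ i, i < σ i := by
  by_contra! hle
  refine hσ (Equiv.ext fun i => Fin.ext ?_)
  have hsum : ∑ i, ((σ i : Fin k) : ℕ) = ∑ i : Fin k, (i : ℕ) := Equiv.sum_comp σ _
  exact (sum_eq_sum_iff_of_le fun i _ => Fin.val_le_of_le (hle i)).1 hsum i (mem_univ i)

theorem Finset.prod_filter_castLE {M : Type*} [CommMonoid M] {n k : ℕ} (hk : k ≤ n)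
    {p : ℕ → Prop} [DecidablePred p] (hp : ∀ m, p m → m < k) (f : Fin n → M) :
    ∏ a ∈ univ.filter (fun a : Fin n => p a), f a
      = ∏ j ∈ univ.filter (fun j : Fin k => p j), f (Fin.castLE hk j) := by
  symm
  refine prod_bij (fun j _ => Fin.castLE hk j) ?_ ?_ ?_ (fun _ _ => rfl)
  · simp
  · simp
  · intro a ha
    have hpa := (mem_filter.1 ha).2
    exact ⟨⟨a, hp a hpa⟩, by simpa using hpa, rfl⟩

section
variable {F : Type*} [Field F] {n k : ℕ} (hk : k ≤ n) {T : Fin k → F} {Z : Fin n → F} (H : F)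

theorem Ufun_comp_eq_zero (hZ : ∀ j, Z (Fin.castLE hk j) = T j) (hT0 : ∀ j, T j ≠ 0)
    {σ : Equiv.Perm (Fin k)} (hσ : σ ≠ 1) : Ufun n k (T ∘ σ) Z H = 0 := by
  obtain ⟨i, hi⟩ := Equiv.Perm.exists_lt_apply_of_ne_one hσ
  refine prod_eq_zero (mem_univ i) ?_
  suffices hvanish :
      ∏ b ∈ univ.filter (fun b : Fin n => i.1 < b.1 ∧ b.1 < k), (1 - Z b / T (σ i)) = 0 by
    simp only [Function.comp_apply, hvanish, mul_zero, zero_mul]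
  refine prod_eq_zero (i := Fin.castLE hk (σ i)) (by simpa using hi) ?_
  rw [hZ, div_self (hT0 _), sub_self]

theorem Ufun_eq_Efun (hZ : ∀ j, Z (Fin.castLE hk j) = T j) (hT : Function.Injective T)
    (hT0 : ∀ j, T j ≠ 0) : Ufun n k T Z H = Efun k T H := by
  have hrow : ∀ i : Fin k, (∏ a ∈ univ.filter (fun a : Fin n => a.1 < i.1), (1 - H * Z a / T i)) *
      (∏ b ∈ univ.filter (fun b : Fin n => i.1 < b.1 ∧ b.1 < k), (1 - Z b / T i)) *
      (∏ j ∈ univ.filter (fun j : Fin k => i < j), ((1 - H * T j / T i) / (1 - T j / T i)))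
        = ∏ j ∈ univ.filter (fun j : Fin k => j ≠ i), (1 - H * T j / T i) := by
    intro i
    rw [prod_filter_castLE hk (p := (· < i.1)) fun m hm => hm.trans i.2,
      prod_filter_castLE hk (p := fun m => i.1 < m ∧ m < k) fun m hm => hm.2]
    simp only [hZ, Fin.is_lt, and_true, Fin.val_fin_lt]
    have hcancel : ∀ j ∈ univ.filter (i < ·),
        (1 - T j / T i) * ((1 - H * T j / T i) / (1 - T j / T i)) = 1 - H * T j / T i := by
      intro j hj
      refine mul_div_cancel₀ _ fun h => ?_
      rw [sub_eq_zero, eq_comm, div_eq_one_iff_eq (hT0 i)] at h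
      exact (mem_filter.1 hj).2.ne' (hT h)
    rw [mul_assoc, ← prod_mul_distrib, prod_congr rfl hcancel, ← prod_union]
    · congr 1
      ext j
      simp [lt_or_lt_iff_ne]
    · exact disjoint_filter.2 fun j _ hji hij => hji.asymm hij
  rw [Efun, Ufun, prod_congr rfl fun i _ => hrow i]
  exact prod_comm' (by simp [ne_comm])

theorem Wtrig_eq_Efun (hZ : ∀ j, Z (Fin.castLE hk j) = T j) (hT : Function.Injective T)
    (hT0 : ∀ j, T j ≠ 0) : Wtrig n k T Z H = Efun k T H := by
  rw [Wtrig, sum_eq_single 1 (fun σ _ hσ => Ufun_comp_eq_zero hk H hZ hT0 hσ) (by simp)]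
  exact Ufun_eq_Efun hk H hZ hT hT0

theorem Rfun_eq_prod (hZ : ∀ j, Z (Fin.castLE hk j) = T j) :
    Rfun n k Z = ∏ i : Fin k, ∏ b ∈ univ.filter (fun b : Fin n => k ≤ b.1), (1 - Z b / T i) := by
  rw [Rfun, prod_filter_castLE hk (p := (· < k)) fun _ hm => hm]
  simp only [hZ, Fin.is_lt, filter_true]

theorem W0_eq_Efun_mul_Rfun (hZ : ∀ j, Z (Fin.castLE hk j) = T j) (hT : Function.Injective T)
    (hT0 : ∀ j, T j ≠ 0) : W0 n k T Z H = Efun k T H * Rfun n k Z := by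
  rw [W0, Wtrig_eq_Efun hk H hZ hT hT0, Rfun_eq_prod hk hZ]

theorem W0_eq_zero {i : Fin k} {a : Fin n} (ha : k ≤ a.1) (hZa : Z a = T i) (hTi : T i ≠ 0) :
    W0 n k T Z H = 0 := by
  refine mul_eq_zero_of_right _ (prod_eq_zero (mem_univ i) (prod_eq_zero (i := a) ?_ ?_))
  · simpa using ha
  · rw [hZa, div_self hTi, sub_self]

end

theorem ZV_injective (n : ℕ) : Function.Injective (ZV n) := fun _ _ h =>
  Sum.inl_injective <| X_injective <| IsFractionRing.injective _ (ZF n) h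

theorem ZV_ne_zero (n : ℕ) (a : Fin n) : ZV n a ≠ 0 :=
  (map_ne_zero_iff _ (IsFractionRing.injective _ (ZF n))).2 (X_ne_zero _)

section
variable {n k : ℕ} (hk : k ≤ n) (J : Finset (Fin n)) (hJ : J.card = k)

theorem permOfSubset_castLE (j : Fin k) :
    permOfSubset hk J hJ (Fin.castLE hk j) = enum J hJ j := by
  have hsplit : finSumFinEquiv.symm ((finCongr (Nat.add_sub_cancel' hk)).symm (Fin.castLE hk j))
      = Sum.inl j := by
    rw [Equiv.symm_apply_eq]
    ext
    simp
  simp only [permOfSubset, Equiv.trans_apply, hsplit]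
  rfl

theorem permOfSubset_apply_mem_iff (a : Fin n) : permOfSubset hk J hJ a ∈ J ↔ a.1 < k := by
  refine ⟨fun hmem => ?_, fun ha => ?_⟩
  · by_contra! ha
    have hsplit : finSumFinEquiv.symm ((finCongr (Nat.add_sub_cancel' hk)).symm a)
        = Sum.inr ⟨a.1 - k, by omega⟩ := by
      rw [Equiv.symm_apply_eq]
      ext
      simp [ha]
    simp only [permOfSubset, Equiv.trans_apply, hsplit, Equiv.sumCongr_apply, Sum.map_inr,
      Equiv.sumCompl_apply_inr] at hmem
    exact (Subtype.prop (p := (· ∉ J)) _) hmem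
  · rw [show a = Fin.castLE hk ⟨a.1, ha⟩ from rfl, permOfSubset_castLE]
    exact (J.orderIsoOfFin hJ _).2

end

theorem enum_injective {n k : ℕ} (I : Finset (Fin n)) (hI : I.card = k) :
    Function.Injective (enum I hI) :=
  Subtype.val_injective.comp (I.orderIsoOfFin hI).injective

/-- Lemma 3.3 for `𝒲⁰`:
`𝒲⁰(Z_I; Z_{σ_J}; H) = δ_{I,J} · E(Z_I;H) · R(Z_{σ_I})`. -/
theorem trig_weight_function_evaluation (n k : ℕ) (hk : k ≤ n)
    (I J : Finset (Fin n)) (hI : I.card = k) (hJ : J.card = k) :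
    W0 n k (fun a => ZV n (enum I hI a)) (ZV n ∘ permOfSubset hk J hJ) (HV n)
      = (if I = J then 1 else 0) *
          Efun k (fun a => ZV n (enum I hI a)) (HV n) *
          Rfun n k (ZV n ∘ permOfSubset hk I hI) := by
  by_cases hIJ : I = J
  · subst hIJ
    rw [if_pos rfl, one_mul]
    refine W0_eq_Efun_mul_Rfun hk _ (fun j => ?_) ((ZV_injective n).comp (enum_injective I hI))
      fun _ => ZV_ne_zero n _
    rw [Function.comp_apply, permOfSubset_castLE]
  · rw [if_neg hIJ, zero_mul, zero_mul]
    obtain ⟨t, htI, htJ⟩ :=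
      not_subset.1 fun h => hIJ (eq_of_subset_of_card_le h (hJ.trans hI.symm).le)
    have ht : k ≤ ((permOfSubset hk J hJ).symm t).1 := by
      rw [← not_lt, ← permOfSubset_apply_mem_iff hk J hJ, Equiv.apply_symm_apply]
      exact htJ
    refine W0_eq_zero (HV n) (i := (I.orderIsoOfFin hI).symm ⟨t, htI⟩) ht ?_ (ZV_ne_zero n _)
    simp [enum]

end
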